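/- For the (2,1)-dimensional superalgebra S₂² ⊕ U₁ˢ with products e₁e₁ = e₁, e₂e₂ = e₂, e₁f₁ = f₁e₁ = f₁, the graded basis change E₁ᵗ = e₁ + e₂, E₂ᵗ = t·e₂, F₁ᵗ = f₁ (for t ≠ 0) yields structure constants which converge as t → 0 to those of S₁₀³: E₁E₁ = E₁, E₁E₂ = E₂E₁ = E₂, E₁F₁ = F₁E₁ = F₁, all other products zero. -/

import Mathlib

open Filter

/-- The multiplication of the (2,1)-superalgebra S₂² ⊕ U₁ˢ on ℂ³ with coordinates
(e₁, e₂; f₁): e₁e₁ = e₁, e₂e₂ = e₂, e₁f₁ = f₁e₁ = f₁, all other products zero. -/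
noncomputable def muS22U : ℂ × ℂ × ℂ → ℂ × ℂ × ℂ → ℂ × ℂ × ℂ :=
  fun x y => (x.1 * y.1, x.2.1 * y.2.1, x.1 * y.2.2 + x.2.2 * y.1)

noncomputable def E1 : ℂ × ℂ × ℂ := (1, 1, 0)        -- E₁ = e₁ + e₂
noncomputable def E2 (t : ℂ) : ℂ × ℂ × ℂ := (0, t, 0) -- E₂ᵗ = t·e₂
noncomputable def F1 : ℂ × ℂ × ℂ := (0, 0, 1)        -- F₁ = f₁

/-! E₁ = e₁ + e₂ is the unit of S₂² ⊕ U₁ˢ, so it keeps acting as the identity in every basis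
`{E₁, E₂ᵗ, F₁}`; only `E₂ᵗE₂ᵗ = t·E₂ᵗ` depends on `t`, and it vanishes in the limit. -/

theorem muS22U_E1_left (x : ℂ × ℂ × ℂ) : muS22U E1 x = x := by
  simp [muS22U, E1]

theorem muS22U_E1_right (x : ℂ × ℂ × ℂ) : muS22U x E1 = x := by
  simp [muS22U, E1]

theorem muS22U_F1_left (x : ℂ × ℂ × ℂ) : muS22U F1 x = x.1 • F1 := by
  simp [muS22U, F1]

theorem muS22U_F1_right (x : ℂ × ℂ × ℂ) : muS22U x F1 = x.1 • F1 := by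
  simp [muS22U, F1]

theorem muS22U_E2_E2 (s t : ℂ) : muS22U (E2 s) (E2 t) = s • E2 t := by
  simp [muS22U, E2]

/-- The graded basis change E₁ᵗ = e₁+e₂, E₂ᵗ = t·e₂, F₁ᵗ = f₁ of S₂² ⊕ U₁ˢ yields
structure constants converging, as t → 0, to those of S₁₀³: E₁E₁ = E₁,
E₁E₂ = E₂E₁ = E₂, E₁F₁ = F₁E₁ = F₁, the only t-dependent product being
E₂ᵗE₂ᵗ = t·E₂ᵗ → 0. -/
theorem degeneration_S22U_to_S103 :
    (∀ t : ℂ, t ≠ 0 →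
      muS22U E1 E1 = E1 ∧
      muS22U E1 (E2 t) = E2 t ∧ muS22U (E2 t) E1 = E2 t ∧
      muS22U E1 F1 = F1 ∧ muS22U F1 E1 = F1 ∧
      muS22U (E2 t) (E2 t) = t • E2 t ∧
      muS22U (E2 t) F1 = 0 ∧ muS22U F1 (E2 t) = 0 ∧ muS22U F1 F1 = 0) ∧
    Tendsto (fun t : ℂ => t) (nhdsWithin 0 {(0 : ℂ)}ᶜ) (nhds 0) := by
  refine ⟨fun t _ => ?_, tendsto_nhdsWithin_of_tendsto_nhds tendsto_id⟩
  simp only [muS22U_E1_left, muS22U_E1_right, muS22U_F1_left, muS22U_F1_right, muS22U_E2_E2]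
  simp [E1, E2, F1]
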